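/- If σ is a nonzero zero of e^{iρ} + ω e^{iωρ} + ω² e^{iω²ρ} (ω = e^{2πi/3}), then ψ(x) = Σ_{r=0}^{2} e^{-iω^r σ x}(e^{-iω^{r+2}σ} - e^{-iω^{r+1}σ}) satisfies (-i d/dx)³ ψ = -σ³ ψ together with ψ(0) = ψ(1) = 0 and ψ'(1) = 0. -/

import Mathlib

/-! ψ is a combination of the exponentials e^{c_r x} with c_r = -iω^r σ, and (-i c_r)³ = -σ³ since
ω³ = 1, which gives the differential equation. The boundary values at 0 and 1 telescope by the
3-periodicity of k ↦ e^{-iω^k σ}. For ψ'(1), the relation 1 + ω + ω² = 0 turns each product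
e^{-iω^a σ} e^{-iω^b σ} into e^{iω^c σ} ({a, b, c} = {0, 1, 2}), and the resulting sum is
(ω² - ω) times the characteristic equation satisfied by σ. -/

open scoped Real

open Complex Finset

lemma hasDerivAt_sum_cexp_mul {ι : Type*} (s : Finset ι) (c A : ι → ℂ) (x : ℝ) :
    HasDerivAt (fun x : ℝ => ∑ i ∈ s, exp (c i * x) * A i)
      (∑ i ∈ s, exp (c i * x) * (c i * A i)) x := by
  refine HasDerivAt.fun_sum fun i _ => ?_
  have hlin : HasDerivAt (fun x : ℝ => c i * (x : ℂ)) (c i) x := by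
    simpa using (hasDerivAt_id x).ofReal_comp.const_mul (c i)
  simpa only [mul_assoc] using hlin.cexp.mul_const (A i)

lemma iteratedDeriv_sum_cexp_mul {ι : Type*} (s : Finset ι) (c A : ι → ℂ) (n : ℕ) :
    iteratedDeriv n (fun x : ℝ => ∑ i ∈ s, exp (c i * x) * A i)
      = fun x : ℝ => ∑ i ∈ s, exp (c i * x) * (c i ^ n * A i) := by
  induction n with
  | zero => simp
  | succ n ih =>
    ext x
    rw [iteratedDeriv_succ, ih, (hasDerivAt_sum_cexp_mul s c _ x).deriv]
    simp only [pow_succ', mul_assoc]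

lemma sum_range_three_mul_sub_eq_zero {R : Type*} [CommRing R] (f : ℕ → R)
    (h3 : f 3 = f 0) (h4 : f 4 = f 1) :
    ∑ r ∈ range 3, f r * (f (r + 2) - f (r + 1)) = 0 := by
  simp only [sum_range_succ, sum_range_zero, h3, h4]
  ring

lemma sum_range_three_pow_mul_cexp_eq_zero {ω σ : ℂ} (hω : 1 + ω + ω ^ 2 = 0)
    (hzero : exp (I * σ) + ω * exp (I * ω * σ) + ω ^ 2 * exp (I * ω ^ 2 * σ) = 0) :
    ∑ r ∈ range 3, ω ^ r * exp (-I * ω ^ r * σ) *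
      (exp (-I * ω ^ (r + 2) * σ) - exp (-I * ω ^ (r + 1) * σ)) = 0 := by
  have hω3 : ω ^ 3 = 1 := by linear_combination (ω - 1) * hω
  have hpair : ∀ u v w : ℂ, u + v + w = 0 →
      exp (-I * u * σ) * exp (-I * v * σ) = exp (I * w * σ) := fun u v w h => by
    rw [← exp_add]; congr 1; linear_combination (-I * σ) * h
  have h02 := hpair 1 (ω ^ 2) ω (by linear_combination hω)
  have h01 := hpair 1 ω (ω ^ 2) (by linear_combination hω)
  have h12 := (hpair ω (ω ^ 2) 1 (by linear_combination hω)).trans (by rw [mul_one])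
  simp only [sum_range_succ, sum_range_zero, zero_add, pow_zero, pow_one,
    show ω ^ (1 + 2) = 1 by rw [hω3], show ω ^ (2 + 2) = ω by linear_combination ω * hω3]
  linear_combination (1 - ω ^ 2) * h02 + (ω - 1) * h01 + (ω ^ 2 - ω) * h12
    + (ω ^ 2 - ω) * hzero - (exp (I * ω * σ) + (ω - 1) * exp (I * ω ^ 2 * σ)) * hω3

theorem stmt2_general (ω σ : ℂ) (hω : ω = Complex.exp (2 * π * Complex.I / 3))
    (hzero : Complex.exp (Complex.I * σ) + ω * Complex.exp (Complex.I * ω * σ)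
      + ω ^ 2 * Complex.exp (Complex.I * ω ^ 2 * σ) = 0)
    (ψ : ℝ → ℂ)
    (hψ : ∀ x : ℝ, ψ x = ∑ r ∈ Finset.range 3,
      Complex.exp (-Complex.I * ω ^ r * σ * x) *
        (Complex.exp (-Complex.I * ω ^ (r + 2) * σ) - Complex.exp (-Complex.I * ω ^ (r + 1) * σ))) :
    (∀ x ∈ Set.Icc (0:ℝ) 1, (-Complex.I) ^ 3 * iteratedDeriv 3 ψ x = -σ ^ 3 * ψ x) ∧
    ψ 0 = 0 ∧ ψ 1 = 0 ∧ deriv ψ 1 = 0 := by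
  have hprim : IsPrimitiveRoot ω 3 := by
    simpa [hω] using isPrimitiveRoot_exp 3 (by norm_num)
  have hω3 : ω ^ 3 = 1 := hprim.pow_eq_one
  have hω2 : 1 + ω + ω ^ 2 = 0 := by
    simpa [sum_range_succ] using hprim.geom_sum_eq_zero (by norm_num)
  have he3 : exp (-I * ω ^ 3 * σ) = exp (-I * ω ^ 0 * σ) := by simp [hω3]
  have he4 : exp (-I * ω ^ 4 * σ) = exp (-I * ω ^ 1 * σ) := by simp [pow_succ, hω3]
  obtain rfl : ψ = _ := funext hψ
  refine ⟨fun x _ => ?_, ?_, ?_, ?_⟩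
  · rw [iteratedDeriv_sum_cexp_mul, mul_sum, mul_sum]
    refine sum_congr rfl fun r _ => ?_
    have hr : (ω ^ r) ^ 3 = 1 := by rw [← pow_mul, mul_comm, pow_mul, hω3, one_pow]
    have hcube : (-I) ^ 3 * (-I * ω ^ r * σ) ^ 3 = -σ ^ 3 := by
      linear_combination σ ^ 3 * I ^ 6 * hr + σ ^ 3 * (I ^ 4 - I ^ 2 + 1) * I_sq
    rw [← hcube]
    ring
  · simp only [ofReal_zero, mul_zero, exp_zero, one_mul]
    refine (sum_range_sub (fun i => exp (-I * ω ^ (i + 1) * σ)) 3).trans ?_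
    exact sub_eq_zero.mpr he4
  · simp only [ofReal_one, mul_one]
    exact sum_range_three_mul_sub_eq_zero (fun k => exp (-I * ω ^ k * σ)) he3 he4
  · rw [(hasDerivAt_sum_cexp_mul _ _ _ 1).deriv, ← mul_zero (-I * σ),
      ← sum_range_three_pow_mul_cexp_eq_zero hω2 hzero, mul_sum]
    simp only [ofReal_one, mul_one]
    exact sum_congr rfl fun r _ => by ring

theorem stmt2 (ω σ : ℂ) (hω : ω = Complex.exp (2 * π * Complex.I / 3))
    (hσ : σ ≠ 0)
    (hzero : Complex.exp (Complex.I * σ) + ω * Complex.exp (Complex.I * ω * σ)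
      + ω ^ 2 * Complex.exp (Complex.I * ω ^ 2 * σ) = 0)
    (ψ : ℝ → ℂ)
    (hψ : ∀ x : ℝ, ψ x = ∑ r ∈ Finset.range 3,
      Complex.exp (-Complex.I * ω ^ r * σ * x) *
        (Complex.exp (-Complex.I * ω ^ (r + 2) * σ) - Complex.exp (-Complex.I * ω ^ (r + 1) * σ))) :
    (∀ x ∈ Set.Icc (0:ℝ) 1, (-Complex.I) ^ 3 * iteratedDeriv 3 ψ x = -σ ^ 3 * ψ x) ∧
    ψ 0 = 0 ∧ ψ 1 = 0 ∧ deriv ψ 1 = 0 :=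
  stmt2_general ω σ hω hzero ψ hψ
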